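/- arXiv:2310.17637 — 2 statements merged into one kernel-verified Lean document; each statement's English description precedes it below -/
import Mathlib

section
/- (Multidimensional high-order positivity theorem.) For faces f = 1, …, n_f and surface points l = 1, …, n_{q,f}, suppose given: interior quadrature states y_q ∈ 𝒢 (q = 1, …, n_q); interior trace states y_{f,l} ∈ 𝒢 and exterior (neighbor) trace states z_{f,l} ∈ 𝒢, each with all concentration components strictly positive; mass-conserving normal viscous fluxes G_{f,l} (from the interior traces) and H_{f,l} (from the exterior traces), each already contracted with the outward unit normal of the element; surface weights ν_{f,l} ≥ 0; coefficients θ_q ≥ 0 and θ_{f,l} > 0 with Σ_q θ_q + Σ_{f,l} θ_{f,l} = 1; dissipation coefficients β_{f,l} > max{β*(y_{f,l}, G_{f,l}), β*(z_{f,l}, H_{f,l})}; and a ratio τ = Δt*/|κ| > 0 satisfying τ·β_{f,l}·ν_{f,l} ≤ θ_{f,l} for all f, l. Then the updated element average ȳ_v := Σ_q θ_q y_q + Σ_{f,l} θ_{f,l} y_{f,l} + τ·Σ_{f,l} ν_{f,l}·[ (G_{f,l} + H_{f,l})/2 − (β_{f,l}/2)(y_{f,l} − z_{f,l}) ] belongs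 to 𝒢. -/
/-!
`𝒢` is convex: for a two-point combination, `ρ(x) ρ(y) Z(a x + b y)` equals
`ρ(a x + b y) (a ρ(y) Z(x) + b ρ(x) Z(y))` plus `a b |ρ(y) m(x) - ρ(x) m(y)|² / 2`.
A mass-conserving shift `y + β⁻¹ G` keeps `ρ`, keeps the concentrations positive once
`β > |G_{C,i}| / C_i`, and changes `Z` into `Z + b(y,G) t - |G_m|² t² / 2` at `t = β⁻¹`, which is
positive once `β > β_T`. With `c = τ ν / θ`, each surface term `θ y + τ ν Ĝ` (`Ĝ = lfFlux`) is
`θ` times the convex combination `(1 - cβ) y + cβ · midpoint(y + β⁻¹ G, z + β⁻¹ H)`, so `ȳ_v` is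
a convex combination of admissible states.
-/

open scoped BigOperators

namespace PaperStmt

noncomputable section

abbrev State (d ns : ℕ) : Type := (Fin d → ℝ) × ℝ × (Fin ns → ℝ)

variable {d ns : ℕ}

/-- Euclidean dot product of momentum-like vectors. -/
def dotP (a b : Fin d → ℝ) : ℝ := ∑ k, a k * b k

/-- Squared Euclidean norm. -/
def normSq (a : Fin d → ℝ) : ℝ := ∑ k, a k ^ 2

/-- Density `ρ(y) = Σ_i W_i C_i`. -/
def rho (W : Fin ns → ℝ) (y : State d ns) : ℝ := ∑ i, W i * y.2.2 i

/-- Scaled shifted internal energy `Z(y) = ρ(y)·E − |m|²/2 − ρ(y)²·u0`. -/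
def Z (W : Fin ns → ℝ) (u0 : ℝ) (y : State d ns) : ℝ :=
  rho W y * y.2.1 - normSq y.1 / 2 - rho W y ^ 2 * u0

/-- The admissible set `𝒢`. -/
def Gset (W : Fin ns → ℝ) (u0 : ℝ) : Set (State d ns) :=
  {y | (∀ i, 0 ≤ y.2.2 i) ∧ 0 < rho W y ∧ 0 < Z W u0 y}

/-- Mass production of a normal viscous flux: `M(G) = Σ_i W_i G_{C,i}`. -/
def Mflux (W : Fin ns → ℝ) (G : State d ns) : ℝ := ∑ i, W i * G.2.2 i

/-- `b(y,G) = ρ(y)·G_E − m·G_m`. -/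
def bCoef (W : Fin ns → ℝ) (y G : State d ns) : ℝ :=
  rho W y * G.2.1 - dotP y.1 G.1

/-- `β_T(y,G) = (|b| + √(b² + 2 Z(y) |G_m|²)) / (2 Z(y))`. -/
def betaT (W : Fin ns → ℝ) (u0 : ℝ) (y G : State d ns) : ℝ :=
  (|bCoef W y G| + Real.sqrt (bCoef W y G ^ 2 + 2 * Z W u0 y * normSq G.1)) /
    (2 * Z W u0 y)

/-- `β*(y,G) = max{ max_i |G_{C,i}|/C_i , β_T(y,G) }`. -/
def betaStar (W : Fin ns → ℝ) (u0 : ℝ) (y G : State d ns) : ℝ :=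
  max (⨆ i, |G.2.2 i| / y.2.2 i) (betaT W u0 y G)

theorem _root_.Convex.sum_add_sum_sigma_mem {𝕜 E ι α : Type*} {κ : α → Type*} [Field 𝕜]
    [LinearOrder 𝕜] [IsStrictOrderedRing 𝕜] [AddCommGroup E] [Module 𝕜 E] [Fintype ι]
    [Fintype α] [∀ i, Fintype (κ i)] {s : Set E} (hs : Convex 𝕜 s)
    {a : ι → 𝕜} {b : ∀ i, κ i → 𝕜} {x : ι → E} {y : ∀ i, κ i → E}
    (ha : ∀ i, 0 ≤ a i) (hb : ∀ i j, 0 ≤ b i j) (hab : ∑ i, a i + ∑ i, ∑ j, b i j = 1)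
    (hx : ∀ i, x i ∈ s) (hy : ∀ i j, y i j ∈ s) :
    ∑ i, a i • x i + ∑ i, ∑ j, b i j • y i j ∈ s := by
  have h := hs.sum_mem (t := Finset.univ) (w := Sum.elim a fun p : Sigma κ => b p.1 p.2)
    (z := Sum.elim x fun p : Sigma κ => y p.1 p.2)
    (by rintro (i | ⟨i, j⟩) - <;> simp [ha, hb])
    (by simpa [Fintype.sum_sum_type, Fintype.sum_sigma] using hab)
    (by rintro (i | ⟨i, j⟩) - <;> simp [hx, hy])
  simpa [Fintype.sum_sum_type, Fintype.sum_sigma] using h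

lemma normSq_nonneg (a : Fin d → ℝ) : 0 ≤ normSq a :=
  Finset.sum_nonneg fun _ _ => sq_nonneg _

lemma normSq_smul_add_smul (a b : ℝ) (u v : Fin d → ℝ) :
    normSq (a • u + b • v) = a ^ 2 * normSq u + 2 * a * b * dotP u v + b ^ 2 * normSq v := by
  simp only [normSq, dotP, Finset.mul_sum, ← Finset.sum_add_distrib]
  exact Finset.sum_congr rfl fun k _ => by
    simp only [Pi.add_apply, Pi.smul_apply, smul_eq_mul]; ring

lemma rho_smul_add_smul (W : Fin ns → ℝ) (a b : ℝ) (x y : State d ns) :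
    rho W (a • x + b • y) = a * rho W x + b * rho W y := by
  simp only [rho, Finset.mul_sum, ← Finset.sum_add_distrib]
  exact Finset.sum_congr rfl fun i _ => by
    simp only [Prod.snd_add, Prod.smul_snd, Pi.add_apply, Pi.smul_apply, smul_eq_mul]; ring

lemma rho_mul_rho_mul_Z_smul_add_smul (W : Fin ns → ℝ) (u0 a b : ℝ) (x y : State d ns) :
    rho W x * rho W y * Z W u0 (a • x + b • y) =
      rho W (a • x + b • y) * (a * rho W y * Z W u0 x + b * rho W x * Z W u0 y)
        + a * b / 2 * normSq (rho W y • x.1 - rho W x • y.1) := by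
  rw [sub_eq_add_neg, ← neg_smul, normSq_smul_add_smul]
  simp only [Z, rho_smul_add_smul, Prod.fst_add, Prod.smul_fst, Prod.snd_add, Prod.smul_snd,
    normSq_smul_add_smul, smul_eq_mul]
  ring

theorem convex_Gset (W : Fin ns → ℝ) (u0 : ℝ) : Convex ℝ (Gset (d := d) W u0) := by
  rintro x ⟨hxC, hxρ, hxZ⟩ y ⟨hyC, hyρ, hyZ⟩ a b ha hb hab
  have hρ : 0 < rho W (a • x + b • y) := by
    simpa [rho_smul_add_smul] using convex_Ioi (0 : ℝ) hxρ hyρ ha hb hab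
  have hZ : 0 < a * rho W y * Z W u0 x + b * rho W x * Z W u0 y := by
    simpa [mul_assoc] using convex_Ioi (0 : ℝ) (mul_pos hyρ hxZ) (mul_pos hxρ hyZ) ha hb hab
  refine ⟨fun i => ?_, hρ, ?_⟩
  · simp only [Prod.snd_add, Prod.smul_snd, Pi.add_apply, Pi.smul_apply, smul_eq_mul]
    exact add_nonneg (mul_nonneg ha (hxC i)) (mul_nonneg hb (hyC i))
  · refine pos_of_mul_pos_right (a := rho W x * rho W y) ?_ (by positivity)
    rw [rho_mul_rho_mul_Z_smul_add_smul]
    have := normSq_nonneg (rho W y • x.1 - rho W x • y.1)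
    positivity

lemma rho_add_smul_of_Mflux_eq_zero (W : Fin ns → ℝ) (c : ℝ) (y : State d ns) {g : State d ns}
    (hg : Mflux W g = 0) : rho W (y + c • g) = rho W y := by
  have hg' : rho W g = 0 := hg
  simpa [hg'] using rho_smul_add_smul W 1 c y g

lemma Z_add_smul (W : Fin ns → ℝ) (u0 c : ℝ) (y : State d ns) {g : State d ns}
    (hg : Mflux W g = 0) :
    Z W u0 (y + c • g) = Z W u0 y + c * bCoef W y g - c ^ 2 * normSq g.1 / 2 := by
  have hm : normSq (y + c • g).1 = normSq y.1 + 2 * c * dotP y.1 g.1 + c ^ 2 * normSq g.1 := by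
    simpa using normSq_smul_add_smul 1 c y.1 g.1
  rw [Z, rho_add_smul_of_Mflux_eq_zero W c y hg, hm, Z, bCoef]
  simp only [Prod.snd_add, Prod.smul_snd, Prod.fst_add, Prod.smul_fst, smul_eq_mul]
  ring

lemma betaT_nonneg (W : Fin ns → ℝ) (u0 : ℝ) {y : State d ns} (G : State d ns)
    (hZ : 0 < Z W u0 y) : 0 ≤ betaT W u0 y G := by
  unfold betaT; positivity

/-- `β_T` dominates `1 / t₊`, where `t₊` is the positive root of `t ↦ Z + B t - n t² / 2`. -/
lemma add_mul_sub_pos_of_betaT_lt {Z B n b : ℝ} (hZ : 0 < Z) (hn : 0 ≤ n)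
    (hb : (|B| + √(B ^ 2 + 2 * Z * n)) / (2 * Z) < b) :
    0 < Z + b⁻¹ * B - b⁻¹ ^ 2 * n / 2 := by
  rw [div_lt_iff₀ (by positivity)] at hb
  have hs := Real.sq_sqrt (by positivity : 0 ≤ B ^ 2 + 2 * Z * n)
  have hs0 := Real.sqrt_nonneg (B ^ 2 + 2 * Z * n)
  have hb0 : 0 < b := by nlinarith [abs_nonneg B]
  have hquad : 0 < Z * b ^ 2 + b * B - n / 2 := by
    have hlt : √(B ^ 2 + 2 * Z * n) < b * (2 * Z) - |B| := by linarith
    nlinarith [neg_abs_le B, sq_abs B, mul_self_lt_mul_self hs0 hlt]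
  have : Z + b⁻¹ * B - b⁻¹ ^ 2 * n / 2 = (Z * b ^ 2 + b * B - n / 2) / b ^ 2 := by
    field_simp
  rw [this]
  positivity

lemma add_inv_smul_mem_Gset (W : Fin ns → ℝ) (u0 : ℝ) {y g : State d ns}
    (hy : y ∈ Gset W u0) (hC : ∀ i, 0 < y.2.2 i) (hg : Mflux W g = 0) {b : ℝ}
    (hb : betaStar W u0 y g < b) : y + b⁻¹ • g ∈ Gset W u0 := by
  obtain ⟨-, hρ, hZ⟩ := hy
  have hCb : ∀ i, |g.2.2 i| / y.2.2 i < b := fun i =>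
    ((le_ciSup (Set.finite_range _).bddAbove i).trans (le_max_left _ _)).trans_lt hb
  have hTb : betaT W u0 y g < b := (le_max_right _ _).trans_lt hb
  have hb0 : 0 < b := (betaT_nonneg W u0 g hZ).trans_lt hTb
  refine ⟨fun i => ?_, ?_, ?_⟩
  · have h := (div_lt_iff₀ (hC i)).1 (hCb i)
    have hsum : 0 ≤ b * y.2.2 i + g.2.2 i := by linarith [neg_abs_le (g.2.2 i)]
    have : y.2.2 i + b⁻¹ * g.2.2 i = b⁻¹ * (b * y.2.2 i + g.2.2 i) := by field_simp
    change 0 ≤ y.2.2 i + b⁻¹ * g.2.2 i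
    rw [this]
    positivity
  · rwa [rho_add_smul_of_Mflux_eq_zero W _ y hg]
  · rw [Z_add_smul W u0 _ y hg]
    exact add_mul_sub_pos_of_betaT_lt hZ (normSq_nonneg _) hTb

def lfFlux (β : ℝ) (y z G H : State d ns) : State d ns :=
  (2 : ℝ)⁻¹ • (G + H) - (β / 2) • (y - z)

lemma add_smul_lfFlux_mem_Gset (W : Fin ns → ℝ) (u0 : ℝ) {y z G H : State d ns} {β c : ℝ}
    (hy : y ∈ Gset W u0) (hz : z ∈ Gset W u0) (hyC : ∀ i, 0 < y.2.2 i)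
    (hzC : ∀ i, 0 < z.2.2 i) (hG : Mflux W G = 0) (hH : Mflux W H = 0)
    (hβ : max (betaStar W u0 y G) (betaStar W u0 z H) < β) (hc : 0 ≤ c) (hcβ : c * β ≤ 1) :
    y + c • lfFlux β y z G H ∈ Gset W u0 := by
  have hyβ := (le_max_left _ _).trans_lt hβ
  have hβ0 : 0 < β := ((betaT_nonneg W u0 G hy.2.2).trans (le_max_right _ _)).trans_lt hyβ
  have hyG := add_inv_smul_mem_Gset W u0 hy hyC hG hyβ
  have hzH := add_inv_smul_mem_Gset W u0 hz hzC hH ((le_max_right _ _).trans_lt hβ)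
  have hmid := convex_Gset W u0 hyG hzH one_half_pos.le one_half_pos.le (add_halves 1)
  have h := convex_Gset W u0 hy hmid (sub_nonneg.2 hcβ) (mul_nonneg hc hβ0.le)
    (sub_add_cancel 1 _)
  convert h using 1
  unfold lfFlux
  match_scalars <;> field_simp
  ring

theorem multiD_high_order_positivity_general (W : Fin ns → ℝ) (u0 : ℝ)
    {nq nf : ℕ} (nql : Fin nf → ℕ)
    (yq : Fin nq → State d ns) (hyq : ∀ q, yq q ∈ Gset W u0)
    (ytr ztr : ∀ f : Fin nf, Fin (nql f) → State d ns)
    (hytr : ∀ f l, ytr f l ∈ Gset W u0) (hztr : ∀ f l, ztr f l ∈ Gset W u0)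
    (hytrC : ∀ f l i, 0 < (ytr f l).2.2 i) (hztrC : ∀ f l i, 0 < (ztr f l).2.2 i)
    (G H : ∀ f : Fin nf, Fin (nql f) → State d ns)
    (hG : ∀ f l, Mflux W (G f l) = 0) (hH : ∀ f l, Mflux W (H f l) = 0)
    (ν : ∀ f : Fin nf, Fin (nql f) → ℝ) (hν : ∀ f l, 0 ≤ ν f l)
    (θq : Fin nq → ℝ) (hθq : ∀ q, 0 ≤ θq q)
    (θfl : ∀ f : Fin nf, Fin (nql f) → ℝ) (hθfl : ∀ f l, 0 < θfl f l)
    (hθsum : (∑ q, θq q) + (∑ f, ∑ l, θfl f l) = 1)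
    (β : ∀ f : Fin nf, Fin (nql f) → ℝ)
    (hβ : ∀ f l,
      max (betaStar W u0 (ytr f l) (G f l)) (betaStar W u0 (ztr f l) (H f l)) < β f l)
    (τ : ℝ) (hτ : 0 < τ) (hτle : ∀ f l, τ * β f l * ν f l ≤ θfl f l) :
    (∑ q, θq q • yq q) + (∑ f, ∑ l, θfl f l • ytr f l)
      + τ • (∑ f, ∑ l, ν f l •
          ((2:ℝ)⁻¹ • (G f l + H f l) - (β f l / 2) • (ytr f l - ztr f l)))
      ∈ Gset W u0 := by
  let F : ∀ f : Fin nf, Fin (nql f) → State d ns := fun f l =>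
    lfFlux (β f l) (ytr f l) (ztr f l) (G f l) (H f l)
  have hstep : ∀ f l, ytr f l + (τ * ν f l / θfl f l) • F f l ∈ Gset W u0 := fun f l =>
    have hθ := hθfl f l
    add_smul_lfFlux_mem_Gset W u0 (hytr f l) (hztr f l) (hytrC f l) (hztrC f l) (hG f l)
      (hH f l) (hβ f l) (div_nonneg (mul_nonneg hτ.le (hν f l)) hθ.le)
      (by rw [div_mul_eq_mul_div, div_le_one hθ]; linarith [hτle f l])
  have hsplit : ∀ f l, θfl f l • ytr f l + τ • ν f l • F f l
      = θfl f l • (ytr f l + (τ * ν f l / θfl f l) • F f l) := fun f l => by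
    rw [smul_add, smul_smul, smul_smul, mul_div_cancel₀ _ (hθfl f l).ne']
  rw [add_assoc]
  convert (convex_Gset W u0).sum_add_sum_sigma_mem hθq (fun f l => (hθfl f l).le) hθsum hyq
    hstep using 2
  simp only [Finset.smul_sum, ← Finset.sum_add_distrib, ← hsplit]
  rfl

/-- multidimensional high-order positivity theorem
(Theorem `CFL-condition-2D-viscous`): under the time-step-size constraint
`τ·β_{f,l}·ν_{f,l} ≤ θ_{f,l}`, the constraints on the dissipation coefficients, and the
conditions on the `θ`'s, the updated element average of the viscous contribution lies
in `𝒢`. -/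
theorem multiD_high_order_positivity (W : Fin ns → ℝ) (u0 : ℝ) (hW : ∀ i, 0 < W i)
    {nq nf : ℕ} (nql : Fin nf → ℕ)
    (yq : Fin nq → State d ns) (hyq : ∀ q, yq q ∈ Gset W u0)
    (ytr ztr : ∀ f : Fin nf, Fin (nql f) → State d ns)
    (hytr : ∀ f l, ytr f l ∈ Gset W u0) (hztr : ∀ f l, ztr f l ∈ Gset W u0)
    (hytrC : ∀ f l i, 0 < (ytr f l).2.2 i) (hztrC : ∀ f l i, 0 < (ztr f l).2.2 i)
    (G H : ∀ f : Fin nf, Fin (nql f) → State d ns)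
    (hG : ∀ f l, Mflux W (G f l) = 0) (hH : ∀ f l, Mflux W (H f l) = 0)
    (ν : ∀ f : Fin nf, Fin (nql f) → ℝ) (hν : ∀ f l, 0 ≤ ν f l)
    (θq : Fin nq → ℝ) (hθq : ∀ q, 0 ≤ θq q)
    (θfl : ∀ f : Fin nf, Fin (nql f) → ℝ) (hθfl : ∀ f l, 0 < θfl f l)
    (hθsum : (∑ q, θq q) + (∑ f, ∑ l, θfl f l) = 1)
    (β : ∀ f : Fin nf, Fin (nql f) → ℝ)
    (hβ : ∀ f l,
      max (betaStar W u0 (ytr f l) (G f l)) (betaStar W u0 (ztr f l) (H f l)) < β f l)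
    (τ : ℝ) (hτ : 0 < τ) (hτle : ∀ f l, τ * β f l * ν f l ≤ θfl f l) :
    (∑ q, θq q • yq q) + (∑ f, ∑ l, θfl f l • ytr f l)
      + τ • (∑ f, ∑ l, ν f l •
          ((2:ℝ)⁻¹ • (G f l + H f l) - (β f l / 2) • (ytr f l - ztr f l)))
      ∈ Gset W u0 :=
  multiD_high_order_positivity_general W u0 nql yq hyq ytr ztr hytr hztr hytrC hztrC G H hG hH ν hν
    θq hθq θfl hθfl hθsum β hβ τ hτ hτle

end
end PaperStmt
end

section
/- (Linear-scaling limiter for the shifted internal energy.) Let y_1, …, y_N be states with ρ(y_x) > 0 and C-components C_i ≥ 0 for all x and i, let ȳ be a state with ρ(ȳ) > 0, and let ε ∈ ℝ satisfy ρu*(ȳ) > ε. Set m* = min_{1 ≤ x ≤ N} ρu*(y_x) and suppose m* ≤ ε. Define ω = (ρu*(ȳ) − ε) / (ρu*(ȳ) − m*). Then ω ∈ [0, 1], and for every x the limited state ȳ + ω·(y_x − ȳ) satisfies ρ > 0 and ρu* ≥ ε. -/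
/-! The map `(m, ρ) ↦ |m|²/ρ` is jointly convex on `ρ > 0` (Sedrakyan's inequality), so `ρu*` is a
linear function minus a convex one, hence concave on the convex half-space `{ρ > 0}`. The limited
state is the convex combination `(1 - ω)ȳ + ω y_x`, so concavity bounds `ρu*` there from below by
`(1 - ω) ρu*(ȳ) + ω m*`, and `ω` is chosen exactly so that this equals `ε`. -/

open scoped BigOperators

namespace PaperStmt

noncomputable section

variable {d ns : ℕ}

/-- Shifted internal energy density `ρu*(y) = E − |m|²/(2ρ(y)) − ρ(y)·u0`. -/
def rhoUstar (W : Fin ns → ℝ) (u0 : ℝ) (y : State d ns) : ℝ :=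
  y.2.1 - normSq y.1 / (2 * rho W y) - rho W y * u0

end

end PaperStmt

lemma add_sq_div_add_le {a b p q : ℝ} (s t : ℝ) (ha : 0 < a) (hb : 0 < b) (hp : 0 < p)
    (hq : 0 < q) : (a * s + b * t) ^ 2 / (a * p + b * q) ≤ a * (s ^ 2 / p) + b * (t ^ 2 / q) := by
  have h := Finset.sq_sum_div_le_sum_sq_div Finset.univ ![a * s, b * t] (g := ![a * p, b * q])
    (by simp [Fin.forall_fin_two, *])
  simp only [Fin.sum_univ_two, Matrix.cons_val_zero, Matrix.cons_val_one] at h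
  refine h.trans_eq ?_
  field_simp

lemma sub_div_sub_mem_Icc {a ε m : ℝ} (hε : ε < a) (hm : m ≤ ε) :
    (a - ε) / (a - m) ∈ Set.Icc 0 1 :=
  ⟨div_nonneg (by linarith) (by linarith), (div_le_one (by linarith)).2 (by linarith)⟩

lemma ConcaveOn.le_map_add_smul_sub {E : Type*} [AddCommGroup E] [Module ℝ E] {s : Set E}
    {f : E → ℝ} (hf : ConcaveOn ℝ s f) {x y : E} (hx : x ∈ s) (hy : y ∈ s) {t : ℝ}
    (ht : t ∈ Set.Icc 0 1) : (1 - t) * f x + t * f y ≤ f (x + t • (y - x)) := by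
  have h := hf.2 hx hy (sub_nonneg.2 ht.2) ht.1 (by ring)
  rwa [show (1 - t) • x + t • y = x + t • (y - x) by module] at h

lemma ConcaveOn.le_map_limited {E : Type*} [AddCommGroup E] [Module ℝ E] {s : Set E}
    {f : E → ℝ} (hf : ConcaveOn ℝ s f) {xbar y : E} (hxbar : xbar ∈ s) (hy : y ∈ s)
    {ε m : ℝ} (hε : ε < f xbar) (hmε : m ≤ ε) (hmy : m ≤ f y) :
    ε ≤ f (xbar + ((f xbar - ε) / (f xbar - m)) • (y - xbar)) := by
  set ω := (f xbar - ε) / (f xbar - m)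
  have hω : ω ∈ Set.Icc 0 1 := sub_div_sub_mem_Icc hε hmε
  have hωm : ω * (f xbar - m) = f xbar - ε := div_mul_cancel₀ _ (by linarith)
  calc ε = (1 - ω) * f xbar + ω * m := by linarith
    _ ≤ (1 - ω) * f xbar + ω * f y := by gcongr; exact hω.1
    _ ≤ _ := hf.le_map_add_smul_sub hxbar hy hω

namespace PaperStmt

variable {d ns : ℕ}

@[simp]
lemma rho_add (W : Fin ns → ℝ) (y z : State d ns) : rho W (y + z) = rho W y + rho W z := by
  simp [rho, mul_add, Finset.sum_add_distrib]

@[simp]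
lemma rho_smul (W : Fin ns → ℝ) (c : ℝ) (y : State d ns) : rho W (c • y) = c * rho W y := by
  simp [rho, Finset.mul_sum, mul_left_comm]

lemma isLinearMap_rho (W : Fin ns → ℝ) : IsLinearMap ℝ (rho W : State d ns → ℝ) :=
  ⟨rho_add W, rho_smul W⟩

lemma convex_rho_pos (W : Fin ns → ℝ) : Convex ℝ {y : State d ns | 0 < rho W y} :=
  convex_halfSpace_gt (isLinearMap_rho W) 0

lemma convexOn_normSq_div_rho (W : Fin ns → ℝ) :
    ConvexOn ℝ {y : State d ns | 0 < rho W y} (fun y => normSq y.1 / (2 * rho W y)) := by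
  refine convexOn_iff_forall_pos.2 ⟨convex_rho_pos W, fun y hy z hz a b ha hb _ => ?_⟩
  simp only [Set.mem_ofPred_eq] at hy hz
  simp only [normSq, rho_add, rho_smul, Prod.fst_add, Prod.smul_fst, Pi.add_apply, Pi.smul_apply,
    smul_eq_mul, Finset.sum_div, Finset.mul_sum, ← Finset.sum_add_distrib]
  refine Finset.sum_le_sum fun k _ => ?_
  rw [mul_add, mul_left_comm 2 a, mul_left_comm 2 b]
  exact add_sq_div_add_le (y.1 k) (z.1 k) ha hb (by positivity) (by positivity)

lemma concaveOn_rhoUstar (W : Fin ns → ℝ) (u0 : ℝ) :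
    ConcaveOn ℝ {y : State d ns | 0 < rho W y} (rhoUstar W u0) := by
  have hlin : IsLinearMap ℝ (fun y : State d ns => y.2.1 - rho W y * u0) :=
    ⟨fun y z => by simp only [Prod.snd_add, Prod.fst_add, rho_add]; ring,
     fun c y => by simp only [Prod.smul_snd, Prod.smul_fst, rho_smul, smul_eq_mul]; ring⟩
  have h_eq : rhoUstar W u0 =
      fun y : State d ns => (y.2.1 - rho W y * u0) - normSq y.1 / (2 * rho W y) := by
    funext y
    simp only [rhoUstar]
    ring
  rw [h_eq]
  exact ((IsLinearMap.mk' _ hlin).concaveOn (convex_rho_pos W)).sub (convexOn_normSq_div_rho W)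

theorem linear_scaling_limiter_general (W : Fin ns → ℝ) (u0 : ℝ)
    {N : ℕ} (y : Fin N → State d ns)
    (hρ : ∀ x, 0 < rho W (y x))
    (ybar : State d ns) (hρbar : 0 < rho W ybar)
    (ε : ℝ) (hε : ε < rhoUstar W u0 ybar)
    (mstar : ℝ) (hm : mstar = ⨅ x, rhoUstar W u0 (y x)) (hmε : mstar ≤ ε)
    (ω : ℝ) (hω : ω = (rhoUstar W u0 ybar - ε) / (rhoUstar W u0 ybar - mstar)) :
    ω ∈ Set.Icc (0:ℝ) 1 ∧
    ∀ x, 0 < rho W (ybar + ω • (y x - ybar)) ∧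
      ε ≤ rhoUstar W u0 (ybar + ω • (y x - ybar)) := by
  have hmy : ∀ x, mstar ≤ rhoUstar W u0 (y x) := fun x =>
    hm ▸ ciInf_le (Set.finite_range _).bddBelow x
  have hωIcc : ω ∈ Set.Icc (0:ℝ) 1 := hω ▸ sub_div_sub_mem_Icc hε hmε
  refine ⟨hωIcc, fun x => ⟨(convex_rho_pos W).add_smul_sub_mem hρbar (hρ x) hωIcc, ?_⟩⟩
  exact hω ▸ (concaveOn_rhoUstar W u0).le_map_limited hρbar (hρ x) hε hmε (hmy x)

/-- the linear-scaling limiter for the shifted internal energy: the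
scaling factor `ω = (ρu*(ȳ) − ε)/(ρu*(ȳ) − m*)` lies in `[0,1]` and every limited state
`ȳ + ω·(y_x − ȳ)` satisfies `ρ > 0` and `ρu* ≥ ε`. -/
theorem linear_scaling_limiter (W : Fin ns → ℝ) (u0 : ℝ) (hW : ∀ i, 0 < W i)
    {N : ℕ} (hN : 0 < N) (y : Fin N → State d ns)
    (hρ : ∀ x, 0 < rho W (y x)) (hC : ∀ x i, 0 ≤ (y x).2.2 i)
    (ybar : State d ns) (hρbar : 0 < rho W ybar)
    (ε : ℝ) (hε : ε < rhoUstar W u0 ybar)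
    (mstar : ℝ) (hm : mstar = ⨅ x, rhoUstar W u0 (y x)) (hmε : mstar ≤ ε)
    (ω : ℝ) (hω : ω = (rhoUstar W u0 ybar - ε) / (rhoUstar W u0 ybar - mstar)) :
    ω ∈ Set.Icc (0:ℝ) 1 ∧
    ∀ x, 0 < rho W (ybar + ω • (y x - ybar)) ∧
      ε ≤ rhoUstar W u0 (ybar + ω • (y x - ybar)) :=
  linear_scaling_limiter_general W u0 y hρ ybar hρbar ε hε mstar hm hmε ω hω

end PaperStmt
end
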